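/- arXiv:2508.14446 — 2 statements merged into one kernel-verified Lean document; each statement's English description precedes it below -/
import Mathlib

section
/- The space of Lipschitz homeomorphisms of the circle equipped with the Lipschitz metric d_1(f,g) = sup_p d(f(p),g(p)) + L(f-g) (where L denotes the Lipschitz seminorm) is not separable. -/
open scoped BigOperators

/-- The Lipschitz seminorm (best Lipschitz constant) of a map of the circle. -/
noncomputable def lipSemi (h : AddCircle (1:ℝ) → AddCircle (1:ℝ)) : ℝ :=
  sInf {K : ℝ | 0 ≤ K ∧ ∀ p q, dist (h p) (h q) ≤ K * dist p q}

/-- Lipschitz homeomorphisms of the circle: Lipschitz bijections with Lipschitz inverse. -/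
def LipHomeoCircle : Set (AddCircle (1:ℝ) → AddCircle (1:ℝ)) :=
  {f | ∃ (K K' : NNReal) (finv : AddCircle (1:ℝ) → AddCircle (1:ℝ)),
    LipschitzWith K f ∧ Function.LeftInverse finv f ∧ Function.RightInverse finv f ∧
    LipschitzWith K' finv}

/-- The Lipschitz metric `d₁(f,g) = d_∞(f,g) + L(f-g)`. -/
noncomputable def dOne (f g : AddCircle (1:ℝ) → AddCircle (1:ℝ)) : ℝ :=
  (⨆ p, dist (f p) (g p)) + lipSemi (f - g)

/-!
For a point `t` of the circle, `F_t p = p + d(p, t) / 2` (`tentMap t`) is the identity plus a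
`1/2`-contraction, hence a bi-Lipschitz homeomorphism. For `s ≠ t` the difference `F_s - F_t` takes
the values `-d(s, t) / 2` at `s` and `d(s, t) / 2` at `t`, points at distance exactly `d(s, t)`
since `d(s, t) ≤ 1/2`; so `L(F_s - F_t) ≥ 1`. A `d₁`-dense set therefore contains, for every `t`,
some `g_t` with `L(F_t - g_t) < 1/2`, and the triangle inequality for `L` makes `t ↦ g_t`
injective: the uncountable circle would embed in a countable set.
-/

open Function
open scoped NNReal

namespace ContractingWith

variable {E : Type*} [NormedAddCommGroup E] {K : ℝ≥0} {φ : E → E}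

theorem antilipschitzWith_id_add (hφ : ContractingWith K φ) :
    AntilipschitzWith (1 - K)⁻¹ fun p => p + φ p := by
  simpa using AntilipschitzWith.id.add_lipschitzWith hφ.toLipschitzWith (by simpa using hφ.1)

theorem surjective_id_add [CompleteSpace E] (hφ : ContractingWith K φ) :
    Surjective fun p => p + φ p := fun y => by
  have hc : ContractingWith K fun p => y - φ p :=
    ⟨hφ.1, LipschitzWith.of_dist_le_mul fun p q => by
      simpa only [dist_sub_left] using hφ.toLipschitzWith.dist_le_mul p q⟩
  exact ⟨_, (sub_eq_iff_eq_add.mp (fixedPoint_isFixedPt (hf := hc))).symm⟩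

end ContractingWith

instance AddCircle.uncountable (p : ℝ) [hp : Fact (0 < p)] : Uncountable (AddCircle p) := by
  refine ⟨fun h => ?_⟩
  have : (Set.Ico (0:ℝ) (0 + p)).Countable :=
    Set.countable_coe_iff.mp (AddCircle.equivIco p 0).symm.injective.countable
  rw [Cardinal.Real.Ico_countable_iff] at this
  linarith [hp.out]

theorem AddCircle.lipschitzWith_coe (p : ℝ) : LipschitzWith 1 ((↑) : ℝ → AddCircle p) :=
  LipschitzWith.of_dist_le_mul fun x y => by
    rw [dist_eq_norm, ← AddCircle.coe_sub, NNReal.coe_one, one_mul, Real.dist_eq,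
      ← Real.norm_eq_abs]
    exact QuotientAddGroup.norm_mk_le_norm

theorem id_add_mem_lipHomeoCircle {K : ℝ≥0} {φ : AddCircle (1:ℝ) → AddCircle (1:ℝ)}
    (hφ : ContractingWith K φ) : (fun p => p + φ p) ∈ LipHomeoCircle := by
  have hbij : Bijective fun p => p + φ p :=
    ⟨hφ.antilipschitzWith_id_add.injective, hφ.surjective_id_add⟩
  exact ⟨1 + K, (1 - K)⁻¹, surjInv hbij.2, LipschitzWith.id.add hφ.toLipschitzWith,
    leftInverse_surjInv hbij, rightInverse_surjInv hbij.2,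
    hφ.antilipschitzWith_id_add.to_rightInverse (rightInverse_surjInv hbij.2)⟩

theorem dist_le_lipSemi_mul {K : ℝ≥0} {h : AddCircle (1:ℝ) → AddCircle (1:ℝ)}
    (hh : LipschitzWith K h) (p q : AddCircle (1:ℝ)) :
    dist (h p) (h q) ≤ lipSemi h * dist p q := by
  rcases eq_or_ne p q with rfl | hpq
  · simp
  have hd : 0 < dist p q := dist_pos.mpr hpq
  rw [← div_le_iff₀ hd]
  exact le_csInf ⟨K, K.2, hh.dist_le_mul⟩ fun K' hK' => (div_le_iff₀ hd).mpr (hK'.2 p q)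

theorem lipSemi_sub_le_dOne (f g : AddCircle (1:ℝ) → AddCircle (1:ℝ)) :
    lipSemi (f - g) ≤ dOne f g :=
  le_add_of_nonneg_left (Real.iSup_nonneg fun _ => dist_nonneg)

noncomputable def halfDist (t p : AddCircle (1:ℝ)) : AddCircle (1:ℝ) :=
  ((dist p t / 2 : ℝ) : AddCircle (1:ℝ))

theorem contractingWith_halfDist (t : AddCircle (1:ℝ)) : ContractingWith 2⁻¹ (halfDist t) := by
  refine ⟨by norm_num, LipschitzWith.of_dist_le_mul fun p q => ?_⟩
  calc dist (halfDist t p) (halfDist t q) ≤ dist (dist p t / 2) (dist q t / 2) := by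
        simpa only [halfDist, NNReal.coe_one, one_mul] using
          (AddCircle.lipschitzWith_coe 1).dist_le_mul (dist p t / 2) (dist q t / 2)
    _ = |dist p t - dist q t| / 2 := by rw [Real.dist_eq, ← sub_div, abs_div, abs_two]
    _ ≤ dist p q / 2 := by gcongr; exact abs_dist_sub_le p q t
    _ = (2⁻¹ : ℝ≥0) * dist p q := by push_cast; ring

noncomputable def tentMap (t p : AddCircle (1:ℝ)) : AddCircle (1:ℝ) :=
  p + halfDist t p

theorem tentMap_mem_lipHomeoCircle (t : AddCircle (1:ℝ)) : tentMap t ∈ LipHomeoCircle :=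
  id_add_mem_lipHomeoCircle (contractingWith_halfDist t)

theorem lipschitzWith_tentMap (t : AddCircle (1:ℝ)) : LipschitzWith (1 + 2⁻¹) (tentMap t) :=
  LipschitzWith.id.add (contractingWith_halfDist t).toLipschitzWith

theorem dist_tentMap_sub_tentMap (s t : AddCircle (1:ℝ)) :
    dist ((tentMap s - tentMap t) s) ((tentMap s - tentMap t) t) = dist s t := by
  have hd : dist s t ≤ 1 / 2 := by
    simpa [dist_eq_norm] using AddCircle.norm_le_half_period 1 (x := s - t) one_ne_zero
  simp only [Pi.sub_apply, tentMap, add_sub_add_left_eq_sub, halfDist, dist_self, zero_div,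
    AddCircle.coe_zero, dist_comm t s]
  rw [dist_eq_norm, zero_sub, sub_zero, ← neg_add', norm_neg, ← AddCircle.coe_add, add_halves,
    (AddCircle.norm_coe_eq_abs_iff 1 one_ne_zero).mpr (by rw [abs_dist, abs_one]; exact hd),
    abs_dist]

theorem one_le_lipSemi_tentMap_sub_add {K : ℝ≥0} {g : AddCircle (1:ℝ) → AddCircle (1:ℝ)}
    (hg : LipschitzWith K g) {s t : AddCircle (1:ℝ)} (hst : s ≠ t) :
    1 ≤ lipSemi (tentMap s - g) + lipSemi (tentMap t - g) := by
  have hd : 0 < dist s t := dist_pos.mpr hst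
  set u := tentMap s - g
  set v := tentMap t - g
  refine le_of_mul_le_mul_right ?_ hd
  calc 1 * dist s t = dist ((tentMap s - tentMap t) s) ((tentMap s - tentMap t) t) := by
        rw [one_mul, dist_tentMap_sub_tentMap]
    _ = dist (u s - v s) (u t - v t) := by simp only [u, v, Pi.sub_apply, sub_sub_sub_cancel_right]
    _ ≤ dist (u s) (u t) + dist (v s) (v t) := dist_sub_sub_le _ _ _ _
    _ ≤ lipSemi u * dist s t + lipSemi v * dist s t :=
        add_le_add (dist_le_lipSemi_mul ((lipschitzWith_tentMap s).sub hg) s t)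
          (dist_le_lipSemi_mul ((lipschitzWith_tentMap t).sub hg) s t)
    _ = (lipSemi u + lipSemi v) * dist s t := by ring

/-- The space of Lipschitz homeomorphisms of the circle with the Lipschitz metric `d₁`
is not separable: there is no countable subset that is dense with respect to `d₁`. -/
theorem lipHomeoCircle_not_separable :
    ¬ ∃ T : Set (AddCircle (1:ℝ) → AddCircle (1:ℝ)),
      T.Countable ∧ T ⊆ LipHomeoCircle ∧
      ∀ f ∈ LipHomeoCircle, ∀ ε : ℝ, 0 < ε → ∃ g ∈ T, dOne f g < ε := by
  rintro ⟨T, hT, hTsub, hdense⟩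
  choose g hgT hg using fun t ↦
    hdense (tentMap t) (tentMap_mem_lipHomeoCircle t) (1 / 2) one_half_pos
  have hclose (t) : lipSemi (tentMap t - g t) < 1 / 2 := (lipSemi_sub_le_dOne _ _).trans_lt (hg t)
  have hinj : Injective fun t => (⟨g t, hgT t⟩ : T) := by
    intro s t hst
    by_contra hne
    obtain ⟨K, -, -, hK, -⟩ := hTsub (hgT s)
    have hsep := one_le_lipSemi_tentMap_sub_add hK hne
    have hgst : g s = g t := congrArg Subtype.val hst
    have hclose_t := hclose t
    rw [← hgst] at hclose_t
    linarith [hclose s]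
  have := hT.to_subtype
  exact not_countable hinj.countable
end

section
/- Rigidity step: suppose φ : Ω → Hom(G) conjugates cocycles f and g (f_x = φ_{σ(x)} ∘ g_x ∘ φ_x^{-1}), the g-cocycle has bounded distortion (L(g^n_x), L((g^n_x)^{-1}) ≤ K for all n), each φ_y is β-Hölder with constant H(φ_y), and along an orbit pair d_∞(φ_{σ^n(y)}^{-1} ∘ φ_{σ^n(x)}, Id) → 0 with H(φ_{σ^n(y)}^{-1}) bounded. Then the sequence a_n = φ_y ∘ (g^n_y)^{-1} ∘ φ_{σ^n(y)}^{-1} ∘ φ_{σ^n(x)} ∘ g^n_x ∘ φ_x^{-1} and b_n = φ_y ∘ (g^n_y)^{-1} ∘ g^n_x ∘ φ_x^{-1} satisfy d_∞(a_n, b_n) ≤ H(φ_y) K^β d_∞(φ_{σ^n(y)}^{-1} ∘ φ_{σ^n(x)}, Id)^β → 0. -/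
open Filter Topology

/-- Iterates of a cocycle: `g^0_x = Id`, `g^{n+1}_x = g_{σ^n(x)} ∘ g^n_x`. -/
def cocycleIter {Ω G : Type*} (σ : Ω → Ω) (f : Ω → G ≃ G) : ℕ → Ω → G ≃ G
  | 0, _ => Equiv.refl G
  | n + 1, x => (cocycleIter σ f n x).trans (f (σ^[n] x))

/-! `φ_y` is `β`-Hölder and `(g^n_y)⁻¹` is `K`-Lipschitz, so the gap between `a_n(p)` and
`b_n(p)` is at most `H(φ_y) K^β` times the `β`-th power of the displacement of
`φ_{σ^n(y)}⁻¹ ∘ φ_{σ^n(x)}` at `g^n_x(φ_x⁻¹ p)`, and that displacement is bounded by the uniform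
distance to the identity, which tends to `0`. -/

lemma dist_le_iSup_dist_self {X : Type*} [PseudoMetricSpace X] [BoundedSpace X]
    (h : X → X) (q : X) : dist (h q) q ≤ ⨆ p, dist (h p) p := by
  refine le_ciSup (f := fun p => dist (h p) p) ⟨Metric.diam (Set.univ : Set X), ?_⟩ q
  rintro _ ⟨p, rfl⟩
  exact Metric.dist_le_diam_of_mem BoundedSpace.bounded_univ (Set.mem_univ _) (Set.mem_univ _)

lemma dist_holder_comp_lipschitz_le {X Y Z : Type*} [PseudoMetricSpace X] [PseudoMetricSpace Y]
    [PseudoMetricSpace Z] {u : Y → Z} {w : X → Y} {H K β S : ℝ}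
    (hu : ∀ p q, dist (u p) (u q) ≤ H * dist p q ^ β)
    (hw : ∀ p q, dist (w p) (w q) ≤ K * dist p q)
    (hH : 0 ≤ H) (hK : 0 ≤ K) (hβ : 0 ≤ β) {a b : X} (hab : dist a b ≤ S) :
    dist (u (w a)) (u (w b)) ≤ H * K ^ β * S ^ β := by
  have hS : 0 ≤ S := dist_nonneg.trans hab
  calc dist (u (w a)) (u (w b)) ≤ H * dist (w a) (w b) ^ β := hu _ _
    _ ≤ H * (K * S) ^ β := by
        gcongr
        exact (hw a b).trans (by gcongr)
    _ = H * K ^ β * S ^ β := by rw [Real.mul_rpow hK hS, mul_assoc]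

lemma tendsto_const_mul_rpow_nhds_zero {α : Type*} {l : Filter α} {s : α → ℝ} {β : ℝ}
    (C : ℝ) (hβ : 0 < β) (hs : Tendsto s l (𝓝 0)) :
    Tendsto (fun a => C * s a ^ β) l (𝓝 0) := by
  simpa [Real.zero_rpow hβ.ne'] using (hs.rpow_const (Or.inr hβ.le)).const_mul C

theorem rigidity_step_general
    {Ω G : Type*} [MetricSpace G] [CompactSpace G]
    (σ : Ω → Ω) (g φ : Ω → G ≃ G) (x y : Ω) (β K Hφ : ℝ)
    (hβ0 : 0 < β) (hK : 0 ≤ K) (hHφ : 0 ≤ Hφ)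
    -- bounded distortion of the `g`-cocycle:
    (hbd : ∀ (n : ℕ) (z : Ω) (p q : G),
      dist (cocycleIter σ g n z p) (cocycleIter σ g n z q) ≤ K * dist p q ∧
      dist ((cocycleIter σ g n z).symm p) ((cocycleIter σ g n z).symm q) ≤ K * dist p q)
    -- `φ_y` is `β`-Hölder with constant `Hφ`:
    (hφy : ∀ p q : G, dist (φ y p) (φ y q) ≤ Hφ * dist p q ^ β)
    -- `d_∞(φ_{σ^n(y)}⁻¹ ∘ φ_{σ^n(x)}, Id) → 0`:
    (htend : Tendsto
      (fun n : ℕ => ⨆ q : G, dist ((φ (σ^[n] y)).symm (φ (σ^[n] x) q)) q)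
      atTop (nhds 0)) :
    (∀ (n : ℕ) (p : G),
      dist
        (φ y ((cocycleIter σ g n y).symm ((φ (σ^[n] y)).symm
          (φ (σ^[n] x) (cocycleIter σ g n x ((φ x).symm p))))))
        (φ y ((cocycleIter σ g n y).symm (cocycleIter σ g n x ((φ x).symm p))))
        ≤ Hφ * K ^ β *
          (⨆ q : G, dist ((φ (σ^[n] y)).symm (φ (σ^[n] x) q)) q) ^ β) ∧
    Tendsto
      (fun n : ℕ => ⨆ p : G,
        dist
          (φ y ((cocycleIter σ g n y).symm ((φ (σ^[n] y)).symm
            (φ (σ^[n] x) (cocycleIter σ g n x ((φ x).symm p))))))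
          (φ y ((cocycleIter σ g n y).symm (cocycleIter σ g n x ((φ x).symm p)))))
      atTop (nhds 0) := by
  have hgap : ∀ (n : ℕ) (p : G), _ ≤ _ := fun n p =>
    dist_holder_comp_lipschitz_le hφy (hbd n y · · |>.2) hHφ hK hβ0.le
      (dist_le_iSup_dist_self (fun q => (φ (σ^[n] y)).symm (φ (σ^[n] x) q))
        (cocycleIter σ g n x ((φ x).symm p)))
  refine ⟨hgap, squeeze_zero (fun _ => Real.iSup_nonneg fun _ => dist_nonneg)
    (fun n => Real.iSup_le (hgap n) ?_) (tendsto_const_mul_rpow_nhds_zero _ hβ0 htend)⟩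
  have hS : 0 ≤ ⨆ q : G, dist ((φ (σ^[n] y)).symm (φ (σ^[n] x) q)) q :=
    Real.iSup_nonneg fun _ => dist_nonneg
  positivity

/-- Rigidity step: if `φ` conjugates the cocycles `f` and `g`, the `g`-cocycle has
bounded distortion `K`, each `φ_y` is `β`-Hölder with constant `H(φ_y)`, and along the
orbit pair `d_∞(φ_{σ^n(y)}⁻¹ ∘ φ_{σ^n(x)}, Id) → 0` while `H(φ_{σ^n(y)}⁻¹)` stays
bounded, then the sequences
`a_n = φ_y ∘ (g^n_y)⁻¹ ∘ φ_{σ^n(y)}⁻¹ ∘ φ_{σ^n(x)} ∘ g^n_x ∘ φ_x⁻¹` and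
`b_n = φ_y ∘ (g^n_y)⁻¹ ∘ g^n_x ∘ φ_x⁻¹` satisfy
`d_∞(a_n, b_n) ≤ H(φ_y) K^β d_∞(φ_{σ^n(y)}⁻¹ ∘ φ_{σ^n(x)}, Id)^β → 0`. -/
theorem rigidity_step
    {Ω G : Type*} [MetricSpace G] [CompactSpace G] [Nonempty G]
    (σ : Ω → Ω) (f g φ : Ω → G ≃ G) (x y : Ω) (β K Hφ M : ℝ)
    (hβ0 : 0 < β) (hβ1 : β ≤ 1) (hK : 0 ≤ K) (hHφ : 0 ≤ Hφ)
    -- `φ` conjugates `f` and `g`: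
    (hconj : ∀ z : Ω, f z = (φ z).symm.trans ((g z).trans (φ (σ z))))
    -- bounded distortion of the `g`-cocycle:
    (hbd : ∀ (n : ℕ) (z : Ω) (p q : G),
      dist (cocycleIter σ g n z p) (cocycleIter σ g n z q) ≤ K * dist p q ∧
      dist ((cocycleIter σ g n z).symm p) ((cocycleIter σ g n z).symm q) ≤ K * dist p q)
    -- `φ_y` is `β`-Hölder with constant `Hφ`:
    (hφy : ∀ p q : G, dist (φ y p) (φ y q) ≤ Hφ * dist p q ^ β)
    -- the Hölder constants `H(φ_{σ^n(y)}⁻¹)` are bounded: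
    (hφinv : ∀ (n : ℕ) (p q : G),
      dist ((φ (σ^[n] y)).symm p) ((φ (σ^[n] y)).symm q) ≤ M * dist p q ^ β)
    -- `d_∞(φ_{σ^n(y)}⁻¹ ∘ φ_{σ^n(x)}, Id) → 0`:
    (htend : Tendsto
      (fun n : ℕ => ⨆ q : G, dist ((φ (σ^[n] y)).symm (φ (σ^[n] x) q)) q)
      atTop (nhds 0)) :
    (∀ (n : ℕ) (p : G),
      dist
        (φ y ((cocycleIter σ g n y).symm ((φ (σ^[n] y)).symm
          (φ (σ^[n] x) (cocycleIter σ g n x ((φ x).symm p))))))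
        (φ y ((cocycleIter σ g n y).symm (cocycleIter σ g n x ((φ x).symm p))))
        ≤ Hφ * K ^ β *
          (⨆ q : G, dist ((φ (σ^[n] y)).symm (φ (σ^[n] x) q)) q) ^ β) ∧
    Tendsto
      (fun n : ℕ => ⨆ p : G,
        dist
          (φ y ((cocycleIter σ g n y).symm ((φ (σ^[n] y)).symm
            (φ (σ^[n] x) (cocycleIter σ g n x ((φ x).symm p))))))
          (φ y ((cocycleIter σ g n y).symm (cocycleIter σ g n x ((φ x).symm p)))))
      atTop (nhds 0) :=
  rigidity_step_general σ g φ x y β K Hφ hβ0 hK hHφ hbd hφy htend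
end
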